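/- For the complement of the cycle on n ≥ 4 vertices, A(complement of C_n) = n·F_{n+1}/L_n, where F_m is the mth Fibonacci number and L_n the nth Lucas number. -/

import Mathlib

open Finset

/-- A partition of the vertex set of `G` into independent (stable) sets. -/
def IsStablePartition {V : Type*} [Fintype V] [DecidableEq V] (G : SimpleGraph V)
    (P : Finpartition (Finset.univ : Finset V)) : Prop :=
  ∀ p ∈ P.parts, ∀ u ∈ p, ∀ v ∈ p, ¬ G.Adj u v

/-- `colS G k` : number of non-equivalent colorings of `G` with exactly `k` colors. -/
noncomputable def colS {V : Type*} [Fintype V] [DecidableEq V] (G : SimpleGraph V) (k : ℕ) : ℕ :=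
  Set.ncard {P : Finpartition (Finset.univ : Finset V) |
    IsStablePartition G P ∧ P.parts.card = k}

/-- `colB G` : total number of non-equivalent colorings of `G`. -/
noncomputable def colB {V : Type*} [Fintype V] [DecidableEq V] (G : SimpleGraph V) : ℕ :=
  ∑ k ∈ Finset.range (Fintype.card V + 1), colS G k

/-- `colT G` : total number of color classes over all non-equivalent colorings of `G`. -/
noncomputable def colT {V : Type*} [Fintype V] [DecidableEq V] (G : SimpleGraph V) : ℕ :=
  ∑ k ∈ Finset.range (Fintype.card V + 1), k * colS G k

/-- `colA G` : average number of colors in the non-equivalent colorings of `G`. -/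
noncomputable def colA {V : Type*} [Fintype V] [DecidableEq V] (G : SimpleGraph V) : ℚ :=
  (colT G : ℚ) / (colB G : ℚ)

/-- Disjoint union of two graphs. -/
def graphUnion {V W : Type*} (G : SimpleGraph V) (H : SimpleGraph W) : SimpleGraph (V ⊕ W) where
  Adj a b := match a, b with
    | Sum.inl x, Sum.inl y => G.Adj x y
    | Sum.inr x, Sum.inr y => H.Adj x y
    | _, _ => False
  symm := by constructor; rintro (x|x) (y|y) h <;> first | exact h.symm | exact h.elim
  loopless := by constructor; rintro (x|x) h <;> first | exact G.loopless.irrefl x h | exact H.loopless.irrefl x h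

/-- Join of two graphs: disjoint union plus all cross edges. -/
def graphJoin {V W : Type*} (G : SimpleGraph V) (H : SimpleGraph W) : SimpleGraph (V ⊕ W) where
  Adj a b := match a, b with
    | Sum.inl x, Sum.inl y => G.Adj x y
    | Sum.inr x, Sum.inr y => H.Adj x y
    | _, _ => True
  symm := by constructor; rintro (x|x) (y|y) h <;> first | exact h.symm | trivial
  loopless := by constructor; rintro (x|x) h <;> first | exact G.loopless.irrefl x h | exact H.loopless.irrefl x h

/-- Deletion of a vertex. -/
def deleteVertex {V : Type*} (G : SimpleGraph V) (v : V) : SimpleGraph {x : V // x ≠ v} :=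
  G.induce {x : V | x ≠ v}


/-- The Lucas numbers. -/
def lucas : ℕ → ℕ
  | 0 => 2
  | 1 => 1
  | (n + 2) => lucas (n + 1) + lucas n


/-!
A stable partition of the complement of `C_n` is a partition of the vertices into cliques of
`C_n`. For `n ≥ 4` the cycle is triangle-free, so the blocks are single vertices and edges
`{v, v + 1}`. Recording the set `S` of the left endpoints `v` of the edge blocks identifies these
partitions with the subsets of `ℤ/n` containing no two cyclically consecutive elements, and the
partition has `n - |S|` blocks.

Cutting the cycle at `0` turns such sets into sets without consecutive elements in an interval,
which are counted by Fibonacci numbers: there are `F_{n+1}` of them with `0 ∉ S` and `F_{n-1}`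
with `0 ∈ S`, so `B = L_n`. Rotations act transitively on the vertices, hence
`T = ∑_S |Sᶜ| = ∑_v #{S | v ∉ S} = n F_{n+1}`.
-/
namespace Finpartition

variable {α : Type*} [DecidableEq α]

lemma card_parts_add_card_filter_card_eq_two {s : Finset α} (P : Finpartition s)
    (h : ∀ p ∈ P.parts, #p ≤ 2) : #P.parts + #(P.parts.filter (#· = 2)) = #s := by
  rw [← P.sum_card_parts, card_eq_sum_ones, card_filter, ← sum_add_distrib]
  refine sum_congr rfl fun p hp => ?_
  have := (P.nonempty_of_mem_parts hp).card_pos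
  have := h p hp
  split_ifs <;> omega

variable [Fintype α]

@[simps! parts]
def ofInvolution (σ : α → α) (hσ : Function.Involutive σ) : Finpartition (univ : Finset α) :=
  ofExistsUnique (univ.image fun a => {a, σ a}) (fun _ _ => subset_univ _)
    (fun a _ => ⟨{a, σ a}, ⟨mem_image_of_mem _ (mem_univ a), mem_insert_self _ _⟩, by
      rintro t ⟨ht, hat⟩
      obtain ⟨b, -, rfl⟩ := mem_image.1 ht
      rcases mem_insert.1 hat with rfl | hab
      · rfl
      · rw [mem_singleton.1 hab, hσ, pair_comm]⟩)
    (fun h => by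
      obtain ⟨a, -, ha⟩ := mem_image.1 h
      exact notMem_empty a (ha ▸ mem_insert_self _ _))

end Finpartition

section StablePartitions

variable {V : Type*} [Fintype V] [DecidableEq V] (G : SimpleGraph V)

open Classical in
noncomputable def stablePartitions : Finset (Finpartition (univ : Finset V)) :=
  univ.filter (IsStablePartition G)

variable {G}

lemma mem_stablePartitions {P : Finpartition (univ : Finset V)} :
    P ∈ stablePartitions G ↔ IsStablePartition G P := by
  simp [stablePartitions]

variable (G)

lemma colS_eq_card (k : ℕ) :
    colS G k = #((stablePartitions G).filter fun P => #P.parts = k) := by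
  rw [colS, ← Set.ncard_coe_finset]
  congr 1
  ext P
  simp [mem_stablePartitions]

lemma card_parts_mem_range (P : Finpartition (univ : Finset V)) :
    #P.parts ∈ range (Fintype.card V + 1) :=
  mem_range_succ_iff.2 P.card_parts_le_card

lemma colB_eq_card : colB G = #(stablePartitions G) := by
  rw [colB, card_eq_sum_card_fiberwise fun P _ => card_parts_mem_range P]
  simp only [colS_eq_card]

lemma colT_eq_sum : colT G = ∑ P ∈ stablePartitions G, #P.parts := by
  rw [colT, ← sum_fiberwise_of_maps_to fun P _ => card_parts_mem_range P]
  refine sum_congr rfl fun k _ => ?_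
  rw [colS_eq_card, sum_congr rfl fun P hP => (mem_filter.1 hP).2, sum_const, smul_eq_mul,
    mul_comm]

variable {G}

lemma IsStablePartition.isClique_of_compl {P : Finpartition (univ : Finset V)}
    (hP : IsStablePartition Gᶜ P) {p : Finset V} (hp : p ∈ P.parts) : G.IsClique (p : Set V) :=
  fun u hu w hw huw => by simpa [huw] using hP p hp u hu w hw

lemma isStablePartition_compl_ofInvolution {σ : V → V} (hσ : Function.Involutive σ)
    (hadj : ∀ v, σ v ≠ v → G.Adj v (σ v)) :
    IsStablePartition Gᶜ (Finpartition.ofInvolution σ hσ) := by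
  intro p hp u hu w hw
  obtain ⟨v, -, rfl⟩ := mem_image.1 hp
  simp only [mem_insert, mem_singleton] at hu hw
  by_cases hv : σ v = v
  · rcases hu with rfl | rfl <;> rcases hw with rfl | rfl <;> simp [hv]
  · have := hadj v hv
    rcases hu with rfl | rfl <;> rcases hw with rfl | rfl <;> simp [this, this.symm]

end StablePartitions

section SparseSets

variable {α : Type*} [Add α] [One α]

/-- On `Fin n` the addition wraps around, so there this forbids cyclically consecutive elements. -/
def Sparse (s : Finset α) : Prop := ∀ a ∈ s, a + 1 ∉ s

instance [DecidableEq α] : DecidablePred (Sparse (α := α)) :=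
  fun s => inferInstanceAs (Decidable (∀ a ∈ s, a + 1 ∉ s))

lemma Sparse.mono {s t : Finset α} (ht : Sparse t) (hst : s ⊆ t) : Sparse s :=
  fun a ha ha1 => ht a (hst ha) (hst ha1)

def sparseSubsets (a b : ℕ) : Finset (Finset ℕ) := (Ico a b).powerset.filter Sparse

@[simp]
lemma mem_sparseSubsets {a b : ℕ} {s : Finset ℕ} :
    s ∈ sparseSubsets a b ↔ s ⊆ Ico a b ∧ Sparse s := by
  simp [sparseSubsets]

lemma filter_notMem_sparseSubsets (a b : ℕ) :
    (sparseSubsets a b).filter (a ∉ ·) = sparseSubsets (a + 1) b := by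
  ext s
  simp only [mem_filter, mem_sparseSubsets, subset_iff, mem_Ico]
  constructor
  · rintro ⟨⟨hs, hsp⟩, ha⟩
    exact ⟨fun i hi => ⟨(hs hi).1.lt_of_ne (by rintro rfl; exact ha hi), (hs hi).2⟩, hsp⟩
  · rintro ⟨hs, hsp⟩
    exact ⟨⟨fun i hi => ⟨by linarith [(hs hi).1], (hs hi).2⟩, hsp⟩, fun ha => by
      linarith [(hs ha).1]⟩

lemma sparseSubsets_of_le {a b : ℕ} (h : b ≤ a) : sparseSubsets a b = {∅} := by
  ext s
  simp only [mem_sparseSubsets, Ico_eq_empty_of_le h, subset_empty, mem_singleton,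
    and_iff_left_iff_imp]
  rintro rfl
  simp [Sparse]

lemma card_filter_mem_sparseSubsets {a b : ℕ} (hab : a < b) :
    #((sparseSubsets a b).filter (a ∈ ·)) = #(sparseSubsets (a + 2) b) := by
  refine (card_nbij' (insert a) (·.erase a) ?_ ?_ ?_ ?_).symm
  · intro s hs
    simp only [coe_filter, mem_sparseSubsets, Set.mem_ofPred_eq, subset_iff, mem_Ico,
      mem_insert, mem_coe] at hs ⊢
    refine ⟨⟨?_, fun i hi hi1 => ?_⟩, by simp⟩
    · rintro i (rfl | hi)
      · exact ⟨le_rfl, hab⟩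
      · have := hs.1 hi; omega
    · rw [mem_insert] at hi hi1
      rcases hi with rfl | hi <;> rcases hi1 with hi1 | hi1
      · omega
      · have := hs.1 hi1; omega
      · have := hs.1 hi; omega
      · exact hs.2 i hi hi1
  · intro s hs
    simp only [coe_filter, mem_sparseSubsets, Set.mem_ofPred_eq, subset_iff, mem_Ico,
      mem_erase, mem_coe] at hs ⊢
    refine ⟨fun i hi => ?_, hs.1.2.mono (erase_subset _ _)⟩
    have := hs.1.1 hi.2
    have : i ≠ a + 1 := by rintro rfl; exact hs.1.2 a hs.2 hi.2
    omega
  · intro s hs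
    simp only [mem_coe, mem_sparseSubsets, subset_iff, mem_Ico] at hs
    exact erase_insert fun ha => by have := hs.1 ha; omega
  · intro s hs
    exact insert_erase (mem_filter.1 hs).2

theorem card_sparseSubsets (a k : ℕ) : #(sparseSubsets a (a + k)) = Nat.fib (k + 2) := by
  induction k using Nat.twoStepInduction generalizing a with
  | zero => simp [sparseSubsets_of_le le_rfl]
  | one =>
    rw [← card_filter_add_card_filter_not (p := (a ∈ ·)), card_filter_mem_sparseSubsets (by omega),
      filter_notMem_sparseSubsets, sparseSubsets_of_le (by omega), sparseSubsets_of_le le_rfl]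
    rfl
  | more k ih₀ ih₁ =>
    rw [← card_filter_add_card_filter_not (p := (a ∈ ·)), card_filter_mem_sparseSubsets (by omega),
      filter_notMem_sparseSubsets, show a + (k + 2) = a + 2 + k by omega, ih₀,
      show a + 2 + k = a + 1 + (k + 1) by omega, ih₁, Nat.fib_add_two (n := k + 2)]

end SparseSets

section CyclicSparseSets

lemma Sparse.image_add_right {α : Type*} [AddCommGroup α] [One α] [DecidableEq α]
    {S : Finset α} (hS : Sparse S) (c : α) : Sparse (S.image (· + c)) := by
  intro a ha ha1
  obtain ⟨s, hs, rfl⟩ := mem_image.1 ha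
  obtain ⟨t, ht, hts⟩ := mem_image.1 ha1
  rw [add_right_comm, add_left_inj] at hts
  exact hS s hs (hts ▸ ht)

lemma sparse_iff_sparse_image_val {n : ℕ} {S : Finset (Fin (n + 1))} :
    Sparse S ↔ Sparse (S.image Fin.val) ∧ ¬(0 ∈ S ∧ Fin.last n ∈ S) := by
  constructor
  · intro hS
    refine ⟨?_, fun ⟨h0, hlast⟩ => hS _ hlast (by rwa [Fin.last_add_one])⟩
    intro i hi hi1
    obtain ⟨v, hv, rfl⟩ := mem_image.1 hi
    obtain ⟨w, hw, hwv⟩ := mem_image.1 hi1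
    have hlt : v < Fin.last n := Fin.lt_last_iff_ne_last.2 fun h => by
      have := w.isLt; rw [h, Fin.val_last] at hwv; omega
    exact hS v hv (by rwa [Fin.ext (hwv.trans (Fin.val_add_one_of_lt hlt).symm)] at hw)
  · rintro ⟨himg, hends⟩ v hv hv1
    rcases eq_or_ne v (Fin.last n) with rfl | hlast
    · exact hends ⟨by rwa [Fin.last_add_one] at hv1, hv⟩
    · refine himg v (mem_image_of_mem _ hv) ?_
      rw [← Fin.val_add_one_of_lt (Fin.lt_last_iff_ne_last.2 hlast)]
      exact mem_image_of_mem _ hv1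

lemma card_eq_card_of_image_val {n : ℕ} {𝒜 : Finset (Finset (Fin n))} {ℬ : Finset (Finset ℕ)}
    (hℬ : ∀ t ∈ ℬ, ∀ i ∈ t, i < n) (h : ∀ S, S ∈ 𝒜 ↔ S.image Fin.val ∈ ℬ) : #𝒜 = #ℬ :=
  card_bij (fun S _ => S.image Fin.val) (fun S hS => (h S).1 hS)
    (fun _ _ _ _ e => image_injective Fin.val_injective e)
    (fun t ht => ⟨t.attachFin (hℬ t ht), (h _).2 (by rwa [image_val_attachFin]),
      image_val_attachFin _⟩)

lemma image_val_subset_Ico_one_iff {n : ℕ} {S : Finset (Fin (n + 1))} :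
    S.image Fin.val ⊆ Ico 1 (n + 1) ↔ 0 ∉ S := by
  simp only [subset_iff, mem_image, mem_Ico, forall_exists_index, and_imp,
    forall_apply_eq_imp_iff₂]
  constructor
  · intro h h0
    simpa using h 0 h0
  · intro h v hv
    exact ⟨Nat.one_le_iff_ne_zero.2 fun h' => h (Fin.val_eq_zero_iff.1 h' ▸ hv), v.isLt⟩

lemma image_val_subset_Ico_zero_iff {n : ℕ} {S : Finset (Fin (n + 1))} :
    S.image Fin.val ⊆ Ico 0 n ↔ Fin.last n ∉ S := by
  simp only [subset_iff, mem_image, mem_Ico, forall_exists_index, and_imp,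
    forall_apply_eq_imp_iff₂]
  constructor
  · intro h hlast
    simpa using h _ hlast
  · intro h v hv
    exact ⟨Nat.zero_le _, Fin.val_lt_last (by rintro rfl; exact h hv)⟩

variable {m : ℕ}

lemma card_filter_sparse_zero_notMem :
    #((univ.filter (Sparse (α := Fin (m + 4)))).filter (0 ∉ ·)) = Nat.fib (m + 5) := by
  rw [← card_sparseSubsets 1 (m + 3)]
  refine card_eq_card_of_image_val (fun t ht i hi => ?_) fun S => ?_
  · have := (mem_sparseSubsets.1 ht).1 hi
    simp only [mem_Ico] at this
    omega
  · simp only [mem_filter, mem_univ, true_and, mem_sparseSubsets, sparse_iff_sparse_image_val,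
      add_comm 1, image_val_subset_Ico_one_iff]
    tauto

lemma card_filter_sparse_zero_mem :
    #((univ.filter (Sparse (α := Fin (m + 4)))).filter (0 ∈ ·)) = Nat.fib (m + 3) := by
  rw [← card_sparseSubsets 2 (m + 1),
    ← card_filter_mem_sparseSubsets (show 0 < 2 + (m + 1) by omega)]
  refine card_eq_card_of_image_val (fun t ht i hi => ?_) fun S => ?_
  · have := (mem_sparseSubsets.1 (mem_filter.1 ht).1).1 hi
    simp only [mem_Ico] at this
    omega
  · simp only [mem_filter, mem_univ, true_and, mem_sparseSubsets, sparse_iff_sparse_image_val,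
      show 2 + (m + 1) = m + 3 by omega, image_val_subset_Ico_zero_iff, mem_image,
      Fin.val_eq_zero_iff, exists_eq_right]
    tauto

lemma card_filter_sparse_notMem_eq {α : Type*} [AddCommGroup α] [One α] [Fintype α]
    [DecidableEq α] (c : α) :
    #((univ.filter (Sparse (α := α))).filter (c ∉ ·)) =
      #((univ.filter (Sparse (α := α))).filter (0 ∉ ·)) := by
  refine card_nbij' (·.image (· + -c)) (·.image (· + c)) ?_ ?_ ?_ ?_
  · intro S hS
    simp only [mem_coe, mem_filter, mem_univ, true_and, mem_image, not_exists, not_and] at hS ⊢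
    exact ⟨hS.1.image_add_right _, fun v hv h => hS.2 (by rwa [← add_neg_eq_zero.1 h])⟩
  · intro S hS
    simp only [mem_coe, mem_filter, mem_univ, true_and, mem_image, not_exists, not_and] at hS ⊢
    exact ⟨hS.1.image_add_right _, fun v hv h => hS.2 (by rwa [← add_eq_right.1 h])⟩
  · intro S _
    simp only [image_image, Function.comp_def, neg_add_cancel_right, image_id']
  · intro S _
    simp only [image_image, Function.comp_def, add_neg_cancel_right, image_id']

end CyclicSparseSets

namespace Fin

variable {m : ℕ}

lemma add_one_add_one_ne_self (v : Fin (m + 3)) : v + 1 + 1 ≠ v := by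
  simp [add_assoc, Fin.ext_iff, Fin.val_add, Nat.mod_eq_of_lt (show 2 < m + 3 by omega)]

lemma add_one_add_one_add_one_ne_self (v : Fin (m + 4)) : v + 1 + 1 + 1 ≠ v := by
  simp [add_assoc, Fin.ext_iff, Fin.val_add, Nat.mod_eq_of_lt (show 3 < m + 4 by omega)]

end Fin

namespace SimpleGraph

variable {m : ℕ}

lemma cycleGraph_adj_iff_eq_add_one {u v : Fin (m + 2)} :
    (cycleGraph (m + 2)).Adj u v ↔ v = u + 1 ∨ u = v + 1 := by
  rw [cycleGraph_adj, sub_eq_iff_eq_add', sub_eq_iff_eq_add', or_comm]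

lemma cycleGraph_cliqueFree_three : (cycleGraph (m + 4)).CliqueFree 3 := by
  intro s hs
  obtain ⟨a, b, c, hab, hac, hbc, rfl⟩ := is3Clique_iff.1 hs
  have h2 := Fin.add_one_add_one_ne_self (m := m + 1)
  have h3 := Fin.add_one_add_one_add_one_ne_self (m := m)
  rw [cycleGraph_adj_iff_eq_add_one] at hab hac hbc
  grind

lemma cycleGraph_isClique_eq_singleton_or_pair {s : Finset (Fin (m + 4))}
    (hs : (cycleGraph (m + 4)).IsClique (s : Set (Fin (m + 4)))) (hne : s.Nonempty) :
    (∃ v, s = {v}) ∨ ∃ v, s = {v, v + 1} := by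
  have hcard : #s < 3 := by
    by_contra! h
    obtain ⟨t, hts, ht⟩ := exists_subset_card_eq h
    exact cycleGraph_cliqueFree_three t ⟨hs.subset (by simpa using hts), ht⟩
  obtain h | h : #s = 1 ∨ #s = 2 := by have := hne.card_pos; omega
  · exact .inl (card_eq_one.1 h)
  · obtain ⟨a, b, hab, rfl⟩ := card_eq_two.1 h
    right
    rcases cycleGraph_adj_iff_eq_add_one.1 (hs (by simp) (by simp) hab) with rfl | rfl
    · exact ⟨a, rfl⟩
    · exact ⟨b, pair_comm _ _⟩

end SimpleGraph

section CycleComplement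

open SimpleGraph

variable {m : ℕ}

lemma pair_add_one_injective :
    Function.Injective fun v : Fin (m + 3) => ({v, v + 1} : Finset _) := by
  intro u v (h : ({u, u + 1} : Finset _) = {v, v + 1})
  have hu : u ∈ ({v, v + 1} : Finset _) := by rw [← h]; simp
  have hu1 : u + 1 ∈ ({v, v + 1} : Finset _) := by rw [← h]; simp
  have := Fin.add_one_add_one_ne_self v
  simp only [mem_insert, mem_singleton] at hu hu1
  grind

def pairSet (P : Finpartition (univ : Finset (Fin (m + 4)))) : Finset (Fin (m + 4)) :=
  univ.filter fun v => {v, v + 1} ∈ P.parts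

lemma mem_pairSet {P : Finpartition (univ : Finset (Fin (m + 4)))} {v : Fin (m + 4)} :
    v ∈ pairSet P ↔ {v, v + 1} ∈ P.parts := by
  simp [pairSet]

lemma sparse_pairSet (P : Finpartition (univ : Finset (Fin (m + 4)))) : Sparse (pairSet P) := by
  intro v hv hv1
  rw [mem_pairSet] at hv hv1
  have := P.eq_of_mem_parts hv hv1 (by simp) (mem_insert_self _ _)
  have hv : v ∈ ({v + 1, v + 1 + 1} : Finset _) := this ▸ mem_insert_self _ _
  have := Fin.add_one_add_one_ne_self (m := m + 1) v
  simp only [mem_insert, mem_singleton] at hv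
  grind

variable {P Q : Finpartition (univ : Finset (Fin (m + 4)))}

lemma IsStablePartition.eq_singleton_or_eq_pair
    (hP : IsStablePartition (cycleGraph (m + 4))ᶜ P) {p : Finset (Fin (m + 4))} (hp : p ∈ P.parts) :
    (∃ v, p = {v}) ∨ ∃ v, p = {v, v + 1} :=
  cycleGraph_isClique_eq_singleton_or_pair (hP.isClique_of_compl hp) (P.nonempty_of_mem_parts hp)

lemma card_parts_add_card_pairSet (hP : IsStablePartition (cycleGraph (m + 4))ᶜ P) :
    #P.parts + #(pairSet P) = m + 4 := by
  have hpairs : P.parts.filter (#· = 2) = (pairSet P).image fun v => {v, v + 1} := by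
    ext p
    simp only [mem_filter, mem_image, mem_pairSet]
    constructor
    · rintro ⟨hp, hcard⟩
      rcases hP.eq_singleton_or_eq_pair hp with ⟨v, rfl⟩ | ⟨v, rfl⟩
      · simp at hcard
      · exact ⟨v, hp, rfl⟩
    · rintro ⟨v, hv, rfl⟩
      exact ⟨hv, card_pair (by simp)⟩
  have hle : ∀ p ∈ P.parts, #p ≤ 2 := fun p hp => by
    rcases hP.eq_singleton_or_eq_pair hp with ⟨v, rfl⟩ | ⟨v, rfl⟩
    · simp
    · exact card_le_two
  have := P.card_parts_add_card_filter_card_eq_two hle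
  rwa [hpairs, card_image_of_injective _ pair_add_one_injective, card_univ, Fintype.card_fin]
    at this

lemma parts_subset_of_pairSet_eq (hP : IsStablePartition (cycleGraph (m + 4))ᶜ P)
    (hQ : IsStablePartition (cycleGraph (m + 4))ᶜ Q) (h : pairSet P = pairSet Q) :
    P.parts ⊆ Q.parts := by
  intro p hp
  obtain ⟨v, hv⟩ := P.nonempty_of_mem_parts hp
  obtain ⟨q, hq, hvq⟩ := Q.exists_mem (mem_univ v)
  rcases hQ.eq_singleton_or_eq_pair hq with ⟨w, rfl⟩ | ⟨w, rfl⟩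
  · rcases hP.eq_singleton_or_eq_pair hp with ⟨u, rfl⟩ | ⟨u, rfl⟩
    · rw [mem_singleton] at hv hvq
      rwa [← hv, hvq]
    · rwa [← mem_pairSet, h, mem_pairSet] at hp
  · have hqP := hq
    rw [← mem_pairSet, ← h, mem_pairSet] at hqP
    rwa [P.eq_of_mem_parts hp hqP hv hvq]

lemma eq_of_pairSet_eq (hP : IsStablePartition (cycleGraph (m + 4))ᶜ P)
    (hQ : IsStablePartition (cycleGraph (m + 4))ᶜ Q) (h : pairSet P = pairSet Q) : P = Q :=
  Finpartition.ext ((parts_subset_of_pairSet_eq hP hQ h).antisymm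
    (parts_subset_of_pairSet_eq hQ hP h.symm))

variable {S : Finset (Fin (m + 4))}

def partner (S : Finset (Fin (m + 4))) (v : Fin (m + 4)) : Fin (m + 4) :=
  if v ∈ S then v + 1 else if v - 1 ∈ S then v - 1 else v

lemma partner_involutive (hS : Sparse S) : Function.Involutive (partner S) := by
  intro v
  have h1 := hS v
  have h2 := hS (v - 1)
  unfold partner
  split_ifs <;> grind

lemma partner_eq_add_one_iff {v : Fin (m + 4)} : partner S v = v + 1 ↔ v ∈ S := by
  have h : v - 1 ≠ v + 1 := fun h => Fin.add_one_add_one_ne_self (m := m + 1) v (by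
    rw [← h, sub_add_cancel])
  unfold partner
  split_ifs <;> simp_all

lemma adj_partner {v : Fin (m + 4)} (hv : partner S v ≠ v) :
    (cycleGraph (m + 4)).Adj v (partner S v) := by
  rw [cycleGraph_adj_iff_eq_add_one]
  unfold partner at hv ⊢
  split_ifs at hv ⊢ <;> grind

lemma pairSet_ofInvolution_partner (hS : Sparse S) :
    pairSet (Finpartition.ofInvolution _ (partner_involutive hS)) = S := by
  ext v
  rw [mem_pairSet, Finpartition.ofInvolution_parts, mem_image, ← partner_eq_add_one_iff]
  have hinv := partner_involutive hS
  constructor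
  · rintro ⟨a, -, ha⟩
    have h1 : a ∈ ({v, v + 1} : Finset _) := by rw [← ha]; simp
    have h2 : v ∈ ({a, partner S a} : Finset _) := by rw [ha]; simp
    have h3 : v + 1 ∈ ({a, partner S a} : Finset _) := by rw [ha]; simp
    have := Fin.add_one_add_one_ne_self (m := m + 1) v
    simp only [mem_insert, mem_singleton] at h1 h2 h3
    grind [Function.Involutive]
  · intro h
    exact ⟨v, mem_univ _, by rw [h]⟩

end CycleComplement

lemma lucas_add_one (n : ℕ) : lucas (n + 1) = Nat.fib (n + 2) + Nat.fib n := by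
  induction n using Nat.twoStepInduction with
  | zero => rfl
  | one => rfl
  | more n ih₀ ih₁ =>
    rw [lucas, ih₁, ih₀, Nat.fib_add_two (n := n + 2), Nat.fib_add_two (n := n)]
    ring

section Counting

open SimpleGraph

variable {m : ℕ}

lemma card_sparse_fin_eq_lucas : #(univ.filter (Sparse (α := Fin (m + 4)))) = lucas (m + 4) := by
  rw [← card_filter_add_card_filter_not (p := (0 ∈ ·)), card_filter_sparse_zero_mem,
    card_filter_sparse_zero_notMem, lucas_add_one (m + 3), add_comm]

lemma sum_sub_card_sparse_fin :
    ∑ S ∈ univ.filter (Sparse (α := Fin (m + 4))), (m + 4 - #S) = (m + 4) * Nat.fib (m + 5) := by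
  calc ∑ S ∈ univ.filter (Sparse (α := Fin (m + 4))), (m + 4 - #S)
      = ∑ S ∈ univ.filter (Sparse (α := Fin (m + 4))), ∑ v, if v ∉ S then 1 else 0 := by
        refine sum_congr rfl fun S _ => ?_
        rw [← card_filter, filter_not, filter_mem_eq_inter, univ_inter, card_univ_sdiff,
          Fintype.card_fin]
    _ = ∑ v, #((univ.filter (Sparse (α := Fin (m + 4)))).filter (v ∉ ·)) := by
        rw [sum_comm]
        simp only [card_filter]
    _ = (m + 4) * Nat.fib (m + 5) := by
        simp only [card_filter_sparse_notMem_eq, card_filter_sparse_zero_notMem, sum_const,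
          card_univ, Fintype.card_fin, smul_eq_mul]

lemma injOn_pairSet : Set.InjOn pairSet
    (stablePartitions (cycleGraph (m + 4))ᶜ : Set (Finpartition (univ : Finset (Fin (m + 4))))) :=
  fun _ hP _ hQ => eq_of_pairSet_eq (mem_stablePartitions.1 hP) (mem_stablePartitions.1 hQ)

lemma image_pairSet_stablePartitions :
    (stablePartitions (cycleGraph (m + 4))ᶜ).image pairSet = univ.filter Sparse := by
  ext S
  simp only [mem_image, mem_stablePartitions, mem_filter, mem_univ, true_and]
  constructor
  · rintro ⟨P, -, rfl⟩
    exact sparse_pairSet P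
  · intro hS
    exact ⟨_, isStablePartition_compl_ofInvolution (partner_involutive hS) fun _ => adj_partner,
      pairSet_ofInvolution_partner hS⟩

lemma colB_cycleGraph_compl : colB (cycleGraph (m + 4))ᶜ = lucas (m + 4) := by
  rw [colB_eq_card, ← card_image_of_injOn injOn_pairSet, image_pairSet_stablePartitions,
    card_sparse_fin_eq_lucas]

lemma colT_cycleGraph_compl : colT (cycleGraph (m + 4))ᶜ = (m + 4) * Nat.fib (m + 5) := by
  rw [colT_eq_sum, ← sum_sub_card_sparse_fin, ← image_pairSet_stablePartitions,
    sum_image injOn_pairSet]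
  refine sum_congr rfl fun P hP => ?_
  have := card_parts_add_card_pairSet (mem_stablePartitions.1 hP)
  omega

end Counting

theorem stmt16 (n : ℕ) (hn : 4 ≤ n) :
    colA ((SimpleGraph.cycleGraph n)ᶜ) =
      ((n * Nat.fib (n + 1) : ℕ) : ℚ) / (lucas n : ℚ) := by
  obtain ⟨m, rfl⟩ : ∃ m, n = m + 4 := ⟨n - 4, by omega⟩
  rw [colA, colT_cycleGraph_compl, colB_cycleGraph_compl]
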